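/- Let H be the digraph with vertex set {1,2,3,4,5} and arc set {12, 23, 34, 41, 15, 35} (a copy of H*). Given a digraph D, let D' be the digraph obtained from D by replacing every arc uv of D with the gadget on vertices v_1, v_2, v_3, v_4, v_5, v_6, v_7, where v_6 = u and v_7 = v and v_1,…,v_5 are new vertices (distinct for different arcs), with arcs {v_1v_2, v_2v_3, v_3v_4, v_4v_1, v_5v_6, v_5v_7, v_1v_6, v_3v_7} (so D' has no arcs between vertices of D). Define costs on D': for every t ∈ V(D), c_4(t) = 0 and c_1(t) = c_2(t) = c_3(t) = c_5(t) = 1; all costs of the gadget vertices v_1,…,v_5 are 0. Then a homomorphism of D' to H exists, and the minimum cost of a homomorphism of D' to H equals |V(D)| − α(D). -/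

import Mathlib

namespace MinHomHstar

/-- the target digraph: vertices 1,…,5 (as 0,…,4 : Fin 5) and arcs
{12, 23, 34, 41, 15, 35}; a copy of H*. -/
def HArc : Fin 5 → Fin 5 → Prop := fun a b =>
  (a, b) ∈ ([(0,1),(1,2),(2,3),(3,0),(0,4),(2,4)] : List (Fin 5 × Fin 5))

/-- vertex set of D': the vertices of D together with five gadget vertices
v_1,…,v_5 (as (e,0),…,(e,4)) for every arc e = uv of D; v_6 = u, v_7 = v. -/
abbrev GV (α : Type*) (Ad : α → α → Prop) : Type _ :=
  α ⊕ ({p : α × α // Ad p.1 p.2} × Fin 5)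

/-- arcs of D': for each arc e = uv of D the gadget arcs
{v₁v₂, v₂v₃, v₃v₄, v₄v₁, v₅v₆, v₅v₇, v₁v₆, v₃v₇} with v₆ = u, v₇ = v. -/
def GArc {α : Type*} (Ad : α → α → Prop) : GV α Ad → GV α Ad → Prop
  | Sum.inr (e, i), Sum.inr (e', i') =>
      e = e' ∧ ((i, i') ∈ ([(0,1),(1,2),(2,3),(3,0)] : List (Fin 5 × Fin 5)))
  | Sum.inr (e, i), Sum.inl w =>
      (i = 4 ∧ w = e.1.1) ∨ (i = 4 ∧ w = e.1.2) ∨ (i = 0 ∧ w = e.1.1) ∨ (i = 2 ∧ w = e.1.2)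
  | _, _ => False

/-- costs: c_4(t) = 0 and c_1(t) = c_2(t) = c_3(t) = c_5(t) = 1 for t ∈ V(D)
(vertex 4 is index 3 : Fin 5); all costs of gadget vertices are 0. -/
def cost {α : Type*} (Ad : α → α → Prop) : Fin 5 → GV α Ad → ℕ
  | h, Sum.inl _ => if h = 3 then 0 else 1
  | _, Sum.inr _ => 0

/-!
A homomorphism of `D'` to `H` pays `1` exactly for the vertices of `D` not sent to `4`. The vertices
sent to `4` are independent in `D`: for an arc `uv`, the gadget 4-cycle `v₁v₂v₃v₄` has `v₁ → u` and
`v₃ → v`, while the only in-neighbour `3` of `4` lies on no 4-cycle of `H`. Conversely every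
independent set `S` extends to a homomorphism sending exactly `S` to `4`.
-/

open Finset

instance : DecidableRel HArc := fun a b => by unfold HArc; infer_instance

lemma not_harc_cycle_of_harc_three :
    ∀ a b c d : Fin 5, HArc a b → HArc b c → HArc c d → HArc d a → HArc a 3 → HArc c 3 → False := by
  decide

section
variable {α : Type*} (Ad : α → α → Prop)

def IsIndep (S : Finset α) : Prop := ∀ a ∈ S, ∀ b ∈ S, a ≠ b → ¬ Ad a b

def IsHom (f : GV α Ad → Fin 5) : Prop := ∀ x y, GArc Ad x y → HArc (f x) (f y)

/-- The vertices of `D` sent to vertex `4` of `H` (index `3`), the only choice of cost `0`. -/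
def freeVerts [Fintype α] (f : GV α Ad → Fin 5) : Finset α := {t | f (.inl t) = 3}

lemma sum_cost_eq [Fintype α] [DecidableRel Ad] (f : GV α Ad → Fin 5) :
    ∑ w, cost Ad (f w) w = Fintype.card α - (freeVerts Ad f).card := by
  have hcost (t : α) : cost Ad (f (.inl t)) (.inl t) = if f (.inl t) ≠ 3 then 1 else 0 := by
    simp only [cost, ite_not]
  have hgadget : ∑ p, cost Ad (f (.inr p)) (.inr p) = 0 := Fintype.sum_eq_zero _ fun _ => rfl
  rw [Fintype.sum_sum_type, hgadget, add_zero]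
  simp only [hcost, sum_boole, Nat.cast_id, ne_eq, freeVerts, ← card_univ]
  exact Nat.eq_sub_of_add_eq' (card_filter_add_card_filter_not _)

lemma isIndep_freeVerts [Fintype α] {f : GV α Ad → Fin 5} (hf : IsHom Ad f) :
    IsIndep Ad (freeVerts Ad f) := by
  intro a ha b hb _ hab
  simp only [freeVerts, mem_filter, mem_univ, true_and] at ha hb
  let e : {p : α × α // Ad p.1 p.2} := ⟨(a, b), hab⟩
  have h01 := hf (.inr (e, 0)) (.inr (e, 1)) ⟨rfl, by decide⟩
  have h12 := hf (.inr (e, 1)) (.inr (e, 2)) ⟨rfl, by decide⟩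
  have h23 := hf (.inr (e, 2)) (.inr (e, 3)) ⟨rfl, by decide⟩
  have h30 := hf (.inr (e, 3)) (.inr (e, 0)) ⟨rfl, by decide⟩
  have h0a := hf (.inr (e, 0)) (.inl a) (.inr (.inr (.inl ⟨rfl, rfl⟩)))
  have h2b := hf (.inr (e, 2)) (.inl b) (.inr (.inr (.inr ⟨rfl, rfl⟩)))
  rw [ha] at h0a
  rw [hb] at h2b
  exact not_harc_cycle_of_harc_three _ _ _ _ h01 h12 h23 h30 h0a h2b

/-- In the paper's names: `S` goes to `4`, the rest of `D` to `5`, and the gadget `v₁,…,v₅` of an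
arc `uv` to `3,4,1,2,3` if `u ∈ S` and to `1,2,3,4,3` otherwise. -/
def homOf [DecidableEq α] (S : Finset α) : GV α Ad → Fin 5
  | .inl t => if t ∈ S then 3 else 4
  | .inr (e, i) => if e.1.1 ∈ S then ![2, 3, 0, 1, 2] i else ![0, 1, 2, 3, 2] i

lemma isHom_homOf [DecidableEq α] (hirr : ∀ a, ¬ Ad a a) {S : Finset α} (hS : IsIndep Ad S) :
    IsHom Ad (homOf Ad S) := by
  rintro (t | ⟨e, i⟩) (w | ⟨e', i'⟩) h
  · exact h.elim
  · exact h.elim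
  · have hne : e.1.1 ≠ e.1.2 := fun h => hirr _ (h ▸ e.2)
    rcases h with ⟨rfl, rfl⟩ | ⟨rfl, rfl⟩ | ⟨rfl, rfl⟩ | ⟨rfl, rfl⟩ <;> simp only [homOf] <;>
      split_ifs <;> first | decide | exact absurd e.2 (hS _ ‹_› _ ‹_› hne)
  · obtain ⟨rfl, hi⟩ := h
    simp only [homOf]
    split_ifs <;> revert i i' <;> decide

lemma freeVerts_homOf [Fintype α] [DecidableEq α] (S : Finset α) :
    freeVerts Ad (homOf Ad S) = S := by
  ext t
  by_cases ht : t ∈ S <;> simp [freeVerts, homOf, ht]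

lemma exists_isIndep_card_max [Fintype α] :
    ∃ S : Finset α, IsIndep Ad S ∧ ∀ T, IsIndep Ad T → T.card ≤ S.card := by
  classical
  obtain ⟨S, hS, hmax⟩ := exists_max_image ({S | IsIndep Ad S} : Finset (Finset α)) card
    ⟨∅, mem_filter.2 ⟨mem_univ _, by simp [IsIndep]⟩⟩
  exact ⟨S, (mem_filter.1 hS).2, fun T hT => hmax T (mem_filter.2 ⟨mem_univ T, hT⟩)⟩

end

theorem stmt15_general {α : Type*} [Fintype α]
    (Ad : α → α → Prop) [DecidableRel Ad] (hirr : Irreflexive Ad) :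
    ∃ m : ℕ,
      IsGreatest {n : ℕ | ∃ S : Finset α,
        (∀ a ∈ S, ∀ b ∈ S, a ≠ b → ¬ Ad a b) ∧ S.card = n} m ∧
      (∃ f : GV α Ad → Fin 5, ∀ x y, GArc Ad x y → HArc (f x) (f y)) ∧
      IsLeast {n : ℕ | ∃ f : GV α Ad → Fin 5,
          (∀ x y, GArc Ad x y → HArc (f x) (f y)) ∧ (∑ w, cost Ad (f w) w) = n}
        (Fintype.card α - m) := by
  classical
  obtain ⟨S, hS, hmax⟩ := exists_isIndep_card_max Ad
  have hhom := isHom_homOf Ad hirr hS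
  refine ⟨S.card, ⟨⟨S, hS, rfl⟩, ?_⟩, ⟨_, hhom⟩, ⟨⟨_, hhom, ?_⟩, ?_⟩⟩
  · rintro _ ⟨T, hT, rfl⟩
    exact hmax T hT
  · rw [sum_cost_eq, freeVerts_homOf]
  · rintro _ ⟨f, hf, rfl⟩
    rw [sum_cost_eq]
    exact Nat.sub_le_sub_left (hmax _ (isIndep_freeVerts Ad hf)) _

/-- Lemma 4.3: a homomorphism of D' to H exists, and the minimum cost of a homomorphism
of D' to H equals |V(D)| − α(D). -/
theorem stmt15 {α : Type*} [Fintype α] [DecidableEq α]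
    (Ad : α → α → Prop) [DecidableRel Ad] (hirr : Irreflexive Ad) :
    ∃ m : ℕ,
      IsGreatest {n : ℕ | ∃ S : Finset α,
        (∀ a ∈ S, ∀ b ∈ S, a ≠ b → ¬ Ad a b) ∧ S.card = n} m ∧
      (∃ f : GV α Ad → Fin 5, ∀ x y, GArc Ad x y → HArc (f x) (f y)) ∧
      IsLeast {n : ℕ | ∃ f : GV α Ad → Fin 5,
          (∀ x y, GArc Ad x y → HArc (f x) (f y)) ∧ (∑ w, cost Ad (f w) w) = n}
        (Fintype.card α - m) :=
  stmt15_general Ad hirr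

end MinHomHstar
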